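/- In a simple undirected graph, for any vertex i: the number of pairs (P, Q), where P is a 4-path from i to some vertex k and Q is a 2-path from i to the same vertex k, equals the number of 6-cycles through i plus correction terms counting degenerate configurations; specifically, if all such pairs (P,Q) with P and Q internally vertex-disjoint are counted, their union forms a 6-cycle through i, giving exactly the number of 6-cycles through i. -/

import Mathlib

set_option maxHeartbeats 1600000

open SimpleGraph

section Aux

variable {V : Type*} [DecidableEq V]

/-- condition that `i,a,b,c,d,e` are the successive vertices of a 6-cycle. -/
def sixCond (G : SimpleGraph V) (i a b c d e : V) : Prop :=
  G.Adj i a ∧ G.Adj a b ∧ G.Adj b c ∧ G.Adj c d ∧ G.Adj d e ∧ G.Adj e i ∧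
  i ≠ a ∧ i ≠ b ∧ i ≠ c ∧ i ≠ d ∧ i ≠ e ∧
  a ≠ b ∧ a ≠ c ∧ a ≠ d ∧ a ≠ e ∧ b ≠ c ∧ b ≠ d ∧ b ≠ e ∧ c ≠ d ∧ c ≠ e ∧ d ≠ e

def SixTup (G : SimpleGraph V) (i : V) :=
  {t : V × V × V × V × V // sixCond G i t.1 t.2.1 t.2.2.1 t.2.2.2.1 t.2.2.2.2}

def mkWalk {G : SimpleGraph V} {i a b c d e : V} (h : sixCond G i a b c d e) :
    G.Walk i i :=
  .cons h.1 (.cons h.2.1 (.cons h.2.2.1 (.cons h.2.2.2.1 (.cons h.2.2.2.2.1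
    (.cons h.2.2.2.2.2.1 .nil)))))

def SixTup.wlk {G : SimpleGraph V} {i : V} (t : SixTup G i) : G.Walk i i := mkWalk t.2

lemma mkWalk_edges {G : SimpleGraph V} {i a b c d e : V} (h : sixCond G i a b c d e) :
    (mkWalk h).edges = [s(i,a),s(a,b),s(b,c),s(c,d),s(d,e),s(e,i)] := rfl

lemma mkWalk_length {G : SimpleGraph V} {i a b c d e : V} (h : sixCond G i a b c d e) :
    (mkWalk h).length = 6 := rfl

lemma mkWalk_support {G : SimpleGraph V} {i a b c d e : V} (h : sixCond G i a b c d e) :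
    (mkWalk h).support = [i,a,b,c,d,e,i] := rfl

lemma mkWalk_isCycle {G : SimpleGraph V} {i a b c d e : V} (h : sixCond G i a b c d e) :
    (mkWalk h).IsCycle := by
  obtain ⟨h1,h2,h3,h4,h5,h6,n1,n2,n3,n4,n5,n6,n7,n8,n9,n10,n11,n12,n13,n14,n15⟩ := h
  rw [Walk.isCycle_def]
  refine ⟨?_, by simp [mkWalk], ?_⟩
  · rw [Walk.isTrail_def]
    simp [mkWalk, List.nodup_cons, Sym2.eq_iff]
    tauto
  · simp [mkWalk, List.nodup_cons]
    tauto

def SixTup.rev {G : SimpleGraph V} {i : V} : SixTup G i → SixTup G i :=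
  fun ⟨⟨a,b,c,d,e⟩, h⟩ => ⟨(e,d,c,b,a), by
    obtain ⟨h1,h2,h3,h4,h5,h6,n1,n2,n3,n4,n5,n6,n7,n8,n9,n10,n11,n12,n13,n14,n15⟩ := h
    refine ⟨h6.symm, h5.symm, h4.symm, h3.symm, h2.symm, h1.symm, ?_⟩
    simp_all only [ne_eq, not_false_eq_true, and_self, Prod.fst, Prod.snd]
    tauto⟩

lemma rev_edges_toFinset {G : SimpleGraph V} {i : V} (t : SixTup G i) :
    t.rev.wlk.edges.toFinset = t.wlk.edges.toFinset := by
  obtain ⟨⟨a,b,c,d,e⟩, h⟩ := t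
  have : (SixTup.rev ⟨(a,b,c,d,e), h⟩).wlk = (SixTup.wlk ⟨(a,b,c,d,e), h⟩).reverse := rfl
  rw [this, Walk.edges_reverse, List.toFinset_reverse]

lemma rev_ne {G : SimpleGraph V} {i : V} (t : SixTup G i) : t.rev ≠ t := by
  obtain ⟨⟨a,b,c,d,e⟩, h⟩ := t
  intro hh
  have := congrArg (fun x => x.1.1) hh
  simp only [SixTup.rev] at this
  exact h.2.2.2.2.2.2.2.2.2.2.2.2.2.2.1 this.symm

/-- the key uniqueness lemma -/
lemma six_chase {i a b c d e a' b' c' d' e' : V}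
    (ia : i ≠ a) (ib : i ≠ b) (ic : i ≠ c) (id1 : i ≠ d) (ie1 : i ≠ e)
    (ab : a ≠ b) (ac : a ≠ c) (ad : a ≠ d) (ae : a ≠ e)
    (bc : b ≠ c) (bd : b ≠ d) (be : b ≠ e) (cd : c ≠ d) (ce : c ≠ e) (de : d ≠ e)
    (ia' : i ≠ a') (ib' : i ≠ b') (ic' : i ≠ c') (id1' : i ≠ d') (ie1' : i ≠ e')
    (ab' : a' ≠ b') (ac' : a' ≠ c') (ad' : a' ≠ d') (ae' : a' ≠ e')
    (bc' : b' ≠ c') (bd' : b' ≠ d') (be' : b' ≠ e') (cd' : c' ≠ d') (ce' : c' ≠ e')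
    (de' : d' ≠ e')
    (h1 : s(i,a') ∈ [s(i,a),s(a,b),s(b,c),s(c,d),s(d,e),s(e,i)])
    (h2 : s(a',b') ∈ [s(i,a),s(a,b),s(b,c),s(c,d),s(d,e),s(e,i)])
    (h3 : s(b',c') ∈ [s(i,a),s(a,b),s(b,c),s(c,d),s(d,e),s(e,i)])
    (h4 : s(c',d') ∈ [s(i,a),s(a,b),s(b,c),s(c,d),s(d,e),s(e,i)])
    (h5 : s(d',e') ∈ [s(i,a),s(a,b),s(b,c),s(c,d),s(d,e),s(e,i)])
    (h6 : s(e',i) ∈ [s(i,a),s(a,b),s(b,c),s(c,d),s(d,e),s(e,i)]) :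
    (a' = a ∧ b' = b ∧ c' = c ∧ d' = d ∧ e' = e) ∨
    (a' = e ∧ b' = d ∧ c' = c ∧ d' = b ∧ e' = a) := by
  have ai := ia.symm; have bi := ib.symm; have ci := ic.symm
  have di := id1.symm; have ei := ie1.symm
  have ba := ab.symm; have ca := ac.symm; have da := ad.symm; have ea := ae.symm
  have cb := bc.symm; have db := bd.symm; have eb := be.symm
  have dc := cd.symm; have ec := ce.symm; have ed := de.symm
  simp only [List.mem_cons, List.not_mem_nil, or_false, Sym2.eq_iff] at h1 h2 h3 h4 h5 h6
  have ha : a = a' ∨ e = a' := by clear h2 h3 h4 h5 h6; tauto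
  rcases ha with h | h
  · subst h
    have hb : b = b' := by clear h1 h3 h4 h5 h6; tauto
    subst hb
    have hc : a = c' ∨ c = c' := by clear h1 h2 h4 h5 h6; tauto
    rcases hc with h | h
    · subst h
      have hd : b = d' := by clear h1 h2 h3 h5 h6; tauto
      exact absurd hd bd'
    · subst h
      have hd : b = d' ∨ d = d' := by clear h1 h2 h3 h5 h6; tauto
      rcases hd with h | h
      · exact absurd h bd'
      · subst h
        have he : c = e' ∨ e = e' := by clear h1 h2 h3 h4 h6; tauto
        rcases he with h | h
        · exact absurd h ce'
        · subst h
          exact Or.inl ⟨rfl, rfl, rfl, rfl, rfl⟩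
  · subst h
    have hb : d = b' := by clear h1 h3 h4 h5 h6; tauto
    subst hb
    have hc : c = c' ∨ e = c' := by clear h1 h2 h4 h5 h6; tauto
    rcases hc with h | h
    · subst h
      have hd : b = d' ∨ d = d' := by clear h1 h2 h3 h5 h6; tauto
      rcases hd with h | h
      · subst h
        have he : a = e' ∨ c = e' := by clear h1 h2 h3 h4 h6; tauto
        rcases he with h | h
        · subst h
          exact Or.inr ⟨rfl, rfl, rfl, rfl, rfl⟩
        · exact absurd h ce'
      · exact absurd h bd'
    · exact absurd h ac'

/-- the pair of paths associated to a six-tuple -/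
def toPair {G : SimpleGraph V} {i : V} :
    SixTup G i → {q : Σ k : V, G.Walk i k × G.Walk i k //
        q.2.1.IsPath ∧ q.2.1.length = 4 ∧ q.2.2.IsPath ∧ q.2.2.length = 2 ∧
        ∀ v, v ∈ q.2.1.support → v ∈ q.2.2.support → v = i ∨ v = q.1} :=
  fun ⟨⟨a,b,c,d,e⟩, h⟩ =>
    ⟨⟨d, .cons h.1 (.cons h.2.1 (.cons h.2.2.1 (.cons h.2.2.2.1 .nil))),
        .cons h.2.2.2.2.2.1.symm (.cons h.2.2.2.2.1.symm .nil)⟩, by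
      obtain ⟨h1,h2,h3,h4,h5,h6,n1,n2,n3,n4,n5,n6,n7,n8,n9,n10,n11,n12,n13,n14,n15⟩ := h
      refine ⟨?_, rfl, ?_, rfl, ?_⟩
      · rw [Walk.isPath_def]; simp [List.nodup_cons]; tauto
      · rw [Walk.isPath_def]; simp [List.nodup_cons]; tauto
      · intro v hv1 hv2
        simp only [Walk.support_cons, Walk.support_nil, List.mem_cons,
          List.not_mem_nil, or_false] at hv1 hv2
        rcases hv1 with rfl | rfl | rfl | rfl | rfl
        · exact Or.inl rfl
        · rcases hv2 with h' | h' | h' <;> simp_all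
        · rcases hv2 with h' | h' | h' <;> simp_all
        · rcases hv2 with h' | h' | h' <;> simp_all
        · exact Or.inr rfl⟩

lemma toPair_bijective {G : SimpleGraph V} {i : V} :
    Function.Bijective (toPair (G := G) (i := i)) := by
  constructor
  · rintro ⟨⟨a,b,c,d,e⟩, h⟩ ⟨⟨a',b',c',d',e'⟩, h'⟩ hh
    have hP := congrArg (fun q => q.1.2.1.support) hh
    have hQ := congrArg (fun q => q.1.2.2.support) hh
    simp only [toPair, Walk.support_cons, Walk.support_nil] at hP hQ
    simp only [List.cons.injEq, and_true] at hP hQ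
    obtain ⟨-, rfl, rfl, rfl, rfl, -⟩ := hP
    obtain ⟨-, rfl, -⟩ := hQ
    rfl
  · rintro ⟨⟨k, P, Q⟩, hP, hl4, hQ, hl2, hdisj⟩
    cases P with
    | nil => simp at hl4
    | @cons _ a _ h1 P =>
    cases P with
    | nil => simp at hl4
    | @cons _ b _ h2 P =>
    cases P with
    | nil => simp at hl4
    | @cons _ c _ h3 P =>
    cases P with
    | nil => simp at hl4
    | @cons _ x _ h4 P =>
    cases P with
    | @cons _ y _ h5 P => simp at hl4
    | nil =>
    cases Q with
    | nil => simp at hl2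
    | @cons _ e _ q1 Q =>
    cases Q with
    | nil => simp at hl2
    | @cons _ z _ q2 Q =>
    cases Q with
    | @cons _ w _ q3 Q => simp at hl2
    | nil =>
    rw [Walk.isPath_def] at hP hQ
    simp only [Walk.support_cons, Walk.support_nil, List.nodup_cons, List.mem_cons,
      List.not_mem_nil, or_false, not_or, List.nodup_nil, and_true] at hP hQ
    obtain ⟨⟨nia, nib, nic, nik⟩, ⟨nab, nac, nak⟩, ⟨nbc, nbk⟩, nck, -⟩ := hP
    obtain ⟨⟨nie, nik2⟩, nek, -⟩ := hQ
    have nae : a ≠ e := by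
      intro heq
      rcases hdisj a (by simp) (by simp [heq]) with h | h
      · exact nia h.symm
      · exact nak h
    have nbe : b ≠ e := by
      intro heq
      rcases hdisj b (by simp) (by simp [heq]) with h | h
      · exact nib h.symm
      · exact nbk h
    have nce : c ≠ e := by
      intro heq
      rcases hdisj c (by simp) (by simp [heq]) with h | h
      · exact nic h.symm
      · exact nck h
    exact ⟨⟨(a,b,c,k,e), h1, h2, h3, h4, q2.symm, q1.symm, nia, nib, nic, nik, nie,
      nab, nac, nak, nae, nbc, nbk, nbe, nck, nce, fun h => nek h.symm⟩, rfl⟩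


abbrev SixCycSet (G : SimpleGraph V) (i : V) :=
  {s : Finset (Sym2 V) // ∃ (u : V) (p : G.Walk u u),
    p.IsCycle ∧ p.length = 6 ∧ i ∈ p.support ∧ p.edges.toFinset = s}

def toCyc {G : SimpleGraph V} {i : V} (t : SixTup G i) : SixCycSet G i :=
  ⟨t.wlk.edges.toFinset, i, t.wlk, mkWalk_isCycle t.2, mkWalk_length t.2,
    by rw [SixTup.wlk, mkWalk_support]; simp, rfl⟩

lemma exists_tup {G : SimpleGraph V} {i : V} (s : SixCycSet G i) :
    ∃ t : SixTup G i, t.wlk.edges.toFinset = s.1 := by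
  obtain ⟨s, u, p, hc, hl, hi, he⟩ := s
  simp only
  have hq : (p.rotate i hi).IsCycle := hc.rotate hi
  have hql : (p.rotate i hi).length = 6 := by
    have h1 := congrArg Walk.length (p.take_spec hi)
    rw [Walk.length_append] at h1
    rw [Walk.rotate, Walk.length_append]
    omega
  have hqe : (p.rotate i hi).edges.toFinset = s := by
    rw [← he]
    ext z
    rw [List.mem_toFinset, (p.rotate_edges i hi).perm.mem_iff, List.mem_toFinset]
  set q := p.rotate i hi with hqdef
  clear_value q
  clear hqdef hl he hc hi
  cases q with
  | nil => simp at hql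
  | @cons _ a _ h1 q =>
  cases q with
  | nil => simp at hql
  | @cons _ b _ h2 q =>
  cases q with
  | nil => simp at hql
  | @cons _ c _ h3 q =>
  cases q with
  | nil => simp at hql
  | @cons _ d _ h4 q =>
  cases q with
  | nil => simp at hql
  | @cons _ e _ h5 q =>
  cases q with
  | nil => simp at hql
  | @cons _ f _ h6 q =>
  cases q with
  | @cons _ g _ h7 q => simp at hql
  | nil =>
  have hnd := hq.support_nodup
  simp only [Walk.support_cons, Walk.support_nil, List.tail_cons, List.nodup_cons,
    List.mem_cons, List.not_mem_nil, or_false, not_or, List.nodup_nil, and_true] at hnd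
  obtain ⟨⟨nab, nac, nad, nae, nai⟩, ⟨nbc, nbd, nbe, nbi⟩, ⟨ncd, nce, nci⟩,
    ⟨nde, ndi⟩, nei, -⟩ := hnd
  exact ⟨⟨(a,b,c,d,e), h1, h2, h3, h4, h5, h6,
    fun h => nai h.symm, fun h => nbi h.symm, fun h => nci h.symm,
    fun h => ndi h.symm, fun h => nei h.symm,
    nab, nac, nad, nae, nbc, nbd, nbe, ncd, nce, nde⟩, hqe⟩


lemma fiber_two {G : SimpleGraph V} {i : V} (s : SixCycSet G i) :
    Nat.card {t : SixTup G i // toCyc t = s} = 2 := by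
  obtain ⟨t0, ht0⟩ := exists_tup s
  have key : ∀ t : SixTup G i, toCyc t = s ↔ t.wlk.edges.toFinset = s.1 := by
    intro t
    exact ⟨fun h => congrArg Subtype.val h, fun h => Subtype.ext h⟩
  have huniq : ∀ t : SixTup G i, toCyc t = s → t = t0 ∨ t = t0.rev := by
    intro t ht
    have hE : t.wlk.edges.toFinset = t0.wlk.edges.toFinset := by
      rw [(key t).mp ht, ht0]
    obtain ⟨⟨a,b,c,d,e⟩, hc0⟩ := t0
    obtain ⟨⟨a',b',c',d',e'⟩, hc'⟩ := t
    have w : ∀ z, z ∈ [s(i,a'),s(a',b'),s(b',c'),s(c',d'),s(d',e'),s(e',i)] →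
        z ∈ [s(i,a),s(a,b),s(b,c),s(c,d),s(d,e),s(e,i)] := by
      intro z hz
      have h1 : z ∈ (SixTup.wlk (⟨(a',b',c',d',e'), hc'⟩ : SixTup G i)).edges.toFinset :=
        List.mem_toFinset.mpr hz
      rw [hE] at h1
      exact List.mem_toFinset.mp h1
    obtain ⟨g1,g2,g3,g4,g5,g6,m1,m2,m3,m4,m5,m6,m7,m8,m9,m10,m11,m12,m13,m14,m15⟩ := hc0
    obtain ⟨f1,f2,f3,f4,f5,f6,p1,p2,p3,p4,p5,p6,p7,p8,p9,p10,p11,p12,p13,p14,p15⟩ := hc'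
    have := six_chase m1 m2 m3 m4 m5 m6 m7 m8 m9 m10 m11 m12 m13 m14 m15
      p1 p2 p3 p4 p5 p6 p7 p8 p9 p10 p11 p12 p13 p14 p15
      (w _ (by simp)) (w _ (by simp)) (w _ (by simp)) (w _ (by simp))
      (w _ (by simp)) (w _ (by simp))
    rcases this with ⟨rfl, rfl, rfl, rfl, rfl⟩ | ⟨rfl, rfl, rfl, rfl, rfl⟩
    · exact Or.inl rfl
    · exact Or.inr rfl
  rw [Nat.card_eq_two_iff]
  refine ⟨⟨t0, (key t0).mpr ht0⟩,
    ⟨t0.rev, (key t0.rev).mpr (by rw [rev_edges_toFinset]; exact ht0)⟩, ?_, ?_⟩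
  · intro h
    exact rev_ne t0 (congrArg Subtype.val h).symm
  · apply Set.eq_univ_iff_forall.mpr
    rintro ⟨t, ht⟩
    rcases huniq t ht with h | h
    · exact Or.inl (Subtype.ext h)
    · exact Or.inr (Subtype.ext h)

end Aux

/-- The number of L-cycle subgraphs (identified with their edge sets) containing vertex
`i`. -/
noncomputable def cycleCountThrough {V : Type*} [DecidableEq V] (G : SimpleGraph V) (L : ℕ) (i : V) : ℕ :=
  Nat.card {s : Finset (Sym2 V) // ∃ (u : V) (p : G.Walk u u),
    p.IsCycle ∧ p.length = L ∧ i ∈ p.support ∧ p.edges.toFinset = s}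

/-- The number of pairs of an internally vertex-disjoint 4-path and 2-path from `i` to a
common endpoint `k` equals twice the number of 6-cycles through `i` (each 6-cycle
decomposes this way in exactly two ways). -/
theorem six_cycles_eq_half_disjoint_path_pairs {V : Type*} [Fintype V] [DecidableEq V]
    (G : SimpleGraph V) (i : V) :
    Nat.card {q : Σ k : V, G.Walk i k × G.Walk i k //
        q.2.1.IsPath ∧ q.2.1.length = 4 ∧ q.2.2.IsPath ∧ q.2.2.length = 2 ∧
        ∀ v, v ∈ q.2.1.support → v ∈ q.2.2.support → v = i ∨ v = q.1} =
      2 * cycleCountThrough G 6 i := by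
  classical
  have h1 := Nat.card_eq_of_bijective _ (toPair_bijective (G := G) (i := i))
  haveI : Finite (SixCycSet G i) := Subtype.finite
  haveI : Fintype (SixCycSet G i) := Fintype.ofFinite _
  haveI : Finite (SixTup G i) := Subtype.finite
  haveI : ∀ s : SixCycSet G i, Fintype {t : SixTup G i // toCyc t = s} :=
    fun s => Fintype.ofFinite _
  have h2 : Nat.card (SixTup G i) = 2 * Nat.card (SixCycSet G i) := by
    calc Nat.card (SixTup G i)
        = Nat.card (Σ s : SixCycSet G i, {t : SixTup G i // toCyc t = s}) :=
          Nat.card_congr (Equiv.sigmaFiberEquiv toCyc).symm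
      _ = ∑ s : SixCycSet G i, Nat.card {t : SixTup G i // toCyc t = s} := by
          rw [Nat.card_eq_fintype_card, Fintype.card_sigma]
          exact Finset.sum_congr rfl fun s _ => (Nat.card_eq_fintype_card).symm
      _ = ∑ _s : SixCycSet G i, 2 := by
          exact Finset.sum_congr rfl fun s _ => fiber_two s
      _ = 2 * Nat.card (SixCycSet G i) := by
          rw [Finset.sum_const, Nat.card_eq_fintype_card, smul_eq_mul, mul_comm,
            Finset.card_univ]
  unfold cycleCountThrough
  exact h1.symm.trans h2
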